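/- The series Σ_{k=0}^∞ ((1/2)_k)^4 / ((2)_k)^4 · (4k + 3) and Σ_{j=0}^∞ (−1/4)^j · ((3/2)_j)^5 / ((2)_j)^5 · (20j² + 48j + 29) both converge, and Σ_{k=0}^∞ ((1/2)_k)^4 / ((2)_k)^4 · (4k + 3) = (1/8) · Σ_{j=0}^∞ (−1/4)^j · ((3/2)_j)^5 / ((2)_j)^5 · (20j² + 48j + 29). -/

import Mathlib

/-!
The identity comes from a WZ pair. With the kernel
`K(n,k) = ((1/2)_n/(2)_n)^4 · (-1/4)^k (3/2)_k^5 / ((n+2)_k^4 (2)_k)`, the functions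
`F = K · (8n² + 28n + 29 + (24n+48)k + 20k²)/8` and `G = K · (3 + 4n + (5+4n)k + 2k²)` satisfy
`F(n+1,k) - F(n,k) = G(n,k+1) - G(n,k)`. Summing over `k` shows that `A(n) = Σ_k F(n,k)` decreases
by `G(n,0)`, the `n`-th term of the left series, at each step; since `|F(n,k)| = O(k² 4^{-k}/(n+1))`,
`A(n) → 0`, so the left series sums to `A(0)`, which is `1/8` of the right series.
-/

/-- The Pochhammer symbol `(x)_k = x (x+1) ⋯ (x+k-1) = Γ(x+k)/Γ(x)`. -/
noncomputable def poch (x : ℝ) (k : ℕ) : ℝ := ∏ i ∈ Finset.range k, (x + i)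

open Filter Finset Topology

theorem tendsto_sum_range_of_wz {E : Type*} [AddCommGroup E] [TopologicalSpace E]
    [IsTopologicalAddGroup E] [T2Space E] {F G : ℕ → ℕ → E}
    (hwz : ∀ n k, F (n + 1) k - F n k = G n (k + 1) - G n k)
    (hF : ∀ n, Summable (F n)) (hG : ∀ n, Tendsto (G n) atTop (𝓝 0))
    (hlim : Tendsto (fun n => ∑' k, F n k) atTop (𝓝 0)) :
    Tendsto (fun N => ∑ n ∈ range N, G n 0) atTop (𝓝 (∑' k, F 0 k)) := by
  have hstep : ∀ n, G n 0 = ∑' k, F n k - ∑' k, F (n + 1) k := fun n => by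
    have hsum : HasSum (fun k => G n (k + 1) - G n k) (∑' k, F (n + 1) k - ∑' k, F n k) := by
      simpa only [hwz] using (hF (n + 1)).hasSum.sub (hF n).hasSum
    have htel : Tendsto (fun K => ∑ k ∈ range K, (G n (k + 1) - G n k)) atTop (𝓝 (0 - G n 0)) := by
      simpa only [Finset.sum_range_sub] using (hG n).sub_const (G n 0)
    rw [← neg_sub, ← tendsto_nhds_unique htel hsum.tendsto_sum_nat, zero_sub, neg_neg]
  simp only [hstep, Finset.sum_range_sub']
  simpa using (tendsto_const_nhds (x := ∑' k, F 0 k)).sub hlim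

lemma poch_zero (x : ℝ) : poch x 0 = 1 := Finset.prod_range_zero _

lemma poch_succ (x : ℝ) (k : ℕ) : poch x (k + 1) = poch x k * (x + k) :=
  Finset.prod_range_succ _ _

lemma poch_pos {x : ℝ} (hx : 0 < x) (k : ℕ) : 0 < poch x k :=
  Finset.prod_pos fun i _ => by positivity

lemma poch_add_one_mul (x : ℝ) (k : ℕ) : poch (x + 1) k * x = poch x k * (x + k) := by
  induction k with
  | zero => simp [poch_zero]
  | succ k ih =>
    rw [poch_succ, poch_succ]
    push_cast
    linear_combination (x + 1 + (k : ℝ)) * ih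

lemma poch_le_poch {x y : ℝ} (hx : 0 < x) (h : x ≤ y) (k : ℕ) : poch x k ≤ poch y k :=
  Finset.prod_le_prod (fun i _ => by positivity) (fun i _ => by linarith)

lemma poch_one_half_div_poch_two_le (n : ℕ) : poch (1 / 2) n / poch 2 n ≤ 1 / (n + 1) := by
  have hone : poch 1 n * (n + 1) = poch 2 n := by
    simpa [one_add_one_eq_two, add_comm] using (poch_add_one_mul 1 n).symm
  rw [div_le_div_iff₀ (poch_pos two_pos n) (by positivity), one_mul, ← hone]
  gcongr
  exact poch_le_poch (by norm_num) (by norm_num) n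

noncomputable def wzKernel (n k : ℕ) : ℝ :=
  poch (1/2) n ^ 4 / poch 2 n ^ 4 *
    ((-1/4 : ℝ) ^ k * poch (3/2) k ^ 5 / (poch (2 + (n:ℝ)) k ^ 4 * poch 2 k))

noncomputable def wzF (n k : ℕ) : ℝ :=
  wzKernel n k * ((8*(n:ℝ)^2 + 28*n + 29 + (24*n+48)*k + 20*(k:ℝ)^2)/8)

noncomputable def wzG (n k : ℕ) : ℝ :=
  wzKernel n k * (3 + 4*(n:ℝ) + (5+4*(n:ℝ))*k + 2*(k:ℝ)^2)

lemma wzF_succ_sub (n k : ℕ) : wzF (n+1) k - wzF n k = wzG n (k+1) - wzG n k := by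
  have hshift : poch (2 + ((n:ℝ) + 1)) k = poch (2 + (n:ℝ)) k * (2 + n + k) / (2 + n) := by
    rw [eq_div_iff (by positivity), ← add_assoc]
    exact poch_add_one_mul _ k
  have := (poch_pos two_pos n).ne'
  have := (poch_pos (show (0:ℝ) < 2 + n by positivity) k).ne'
  have := (poch_pos two_pos k).ne'
  simp only [wzF, wzG, wzKernel, poch_succ, pow_succ]
  push_cast
  rw [hshift]
  field_simp
  ring

lemma abs_wzKernel_le (n k : ℕ) : |wzKernel n k| ≤ (1/4) ^ k / (n + 1) ^ 4 := by
  have h2n := poch_pos (show (0:ℝ) < 2 + n by positivity) k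
  have h32 := poch_pos (show (0:ℝ) < 3/2 by norm_num) k
  have h2 := poch_pos two_pos k
  have hratio : poch (3/2) k ^ 5 ≤ poch (2 + (n:ℝ)) k ^ 4 * poch 2 k := by
    rw [pow_succ]
    gcongr
    · exact poch_le_poch (by norm_num) (by linarith [(n.cast_nonneg : (0:ℝ) ≤ n)]) k
    · exact poch_le_poch (by norm_num) (by norm_num) k
  have hr : 0 < poch (1/2) n / poch 2 n := div_pos (poch_pos (by norm_num) n) (poch_pos two_pos n)
  have hn : (poch (1/2) n / poch 2 n) ^ 4 ≤ (1 / (n + 1)) ^ 4 :=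
    pow_le_pow_left₀ hr.le (poch_one_half_div_poch_two_le n) 4
  calc |wzKernel n k|
      = (poch (1/2) n / poch 2 n) ^ 4 *
          ((1/4) ^ k * (poch (3/2) k ^ 5 / (poch (2 + (n:ℝ)) k ^ 4 * poch 2 k))) := by
        rw [wzKernel, ← div_pow, mul_div_assoc, abs_mul, abs_mul, abs_pow, abs_pow,
          abs_of_pos hr, abs_of_pos (show 0 < poch (3/2) k ^ 5 / (poch (2 + (n:ℝ)) k ^ 4 * poch 2 k)
            by positivity)]
        norm_num
    _ ≤ (1 / (n + 1)) ^ 4 * ((1/4) ^ k * 1) := by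
        gcongr
        exact div_le_one_of_le₀ hratio (by positivity)
    _ = (1/4) ^ k / (n + 1) ^ 4 := by field_simp

lemma summable_geometric_quarter_mul_sq :
    Summable fun k : ℕ => (1/4 : ℝ) ^ k * ((k:ℝ) + 1) ^ 2 := by
  have hr : ‖(1/4 : ℝ)‖ < 1 := by norm_num
  refine (((summable_pow_mul_geometric_of_norm_lt_one 2 hr).add
    ((summable_pow_mul_geometric_of_norm_lt_one 1 hr).mul_left 2)).add
    (summable_geometric_of_norm_lt_one hr)).congr fun k => ?_
  ring

lemma abs_wzKernel_mul_le {n k : ℕ} {p c : ℝ} (hp : |p| ≤ c * (n + 1) ^ 3 * (k + 1) ^ 2) :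
    |wzKernel n k * p| ≤ c / (n + 1) * ((1/4) ^ k * ((k:ℝ) + 1) ^ 2) := by
  calc |wzKernel n k * p|
      ≤ (1/4) ^ k / (n + 1) ^ 4 * (c * (n + 1) ^ 3 * (k + 1) ^ 2) := by
        rw [abs_mul]
        exact mul_le_mul (abs_wzKernel_le n k) hp (abs_nonneg _) (by positivity)
    _ = c / (n + 1) * ((1/4) ^ k * ((k:ℝ) + 1) ^ 2) := by
        field_simp

lemma abs_wzF_le (n k : ℕ) : |wzF n k| ≤ 5 / (n + 1) * ((1/4) ^ k * ((k:ℝ) + 1) ^ 2) := by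
  refine abs_wzKernel_mul_le ?_
  rw [abs_of_nonneg (by positivity), ← sub_nonneg]
  ring_nf
  positivity

lemma abs_wzG_le (n k : ℕ) : |wzG n k| ≤ 5 / (n + 1) * ((1/4) ^ k * ((k:ℝ) + 1) ^ 2) := by
  refine abs_wzKernel_mul_le ?_
  rw [abs_of_nonneg (by positivity), ← sub_nonneg]
  ring_nf
  positivity

lemma summable_wzF (n : ℕ) : Summable (wzF n) :=
  .of_norm_bounded (summable_geometric_quarter_mul_sq.mul_left _) (abs_wzF_le n)

lemma tendsto_wzG_atTop (n : ℕ) : Tendsto (wzG n) atTop (𝓝 0) :=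
  (Summable.of_norm_bounded (summable_geometric_quarter_mul_sq.mul_left _)
    (abs_wzG_le n)).tendsto_atTop_zero

lemma tendsto_tsum_wzF_atTop : Tendsto (fun n => ∑' k, wzF n k) atTop (𝓝 0) := by
  refine squeeze_zero_norm (fun n => tsum_of_norm_bounded
    (summable_geometric_quarter_mul_sq.hasSum.mul_left (5 / ((n:ℝ) + 1))) (abs_wzF_le n)) ?_
  convert (tendsto_one_div_add_atTop_nhds_zero_nat.const_mul 5).mul_const
    (∑' k : ℕ, (1/4 : ℝ) ^ k * ((k:ℝ) + 1) ^ 2) using 2 <;> ring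

theorem acceleration_special_case :
    ∃ S T : ℝ,
      HasSum (fun k : ℕ =>
        (poch (1/2) k) ^ 4 / (poch 2 k) ^ 4 * (4 * (k : ℝ) + 3)) S ∧
      HasSum (fun j : ℕ =>
        (-1/4 : ℝ) ^ j * (poch (3/2) j) ^ 5 / (poch 2 j) ^ 5 *
          (20 * (j : ℝ) ^ 2 + 48 * j + 29)) T ∧
      S = 1/8 * T := by
  refine ⟨∑' k, wzF 0 k, 8 * ∑' k, wzF 0 k, ?_, ?_, by ring⟩
  · have hG : ∀ n : ℕ, wzG n 0 = poch (1/2) n ^ 4 / poch 2 n ^ 4 * (4 * (n : ℝ) + 3) := fun n => by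
      simp only [wzG, wzKernel, poch_zero]
      ring
    have hnonneg : ∀ n : ℕ, 0 ≤ wzG n 0 := fun n => by
      have := poch_pos (show (0:ℝ) < 1/2 by norm_num) n
      rw [hG]
      positivity
    rw [← funext hG, hasSum_iff_tendsto_nat_of_nonneg hnonneg]
    exact tendsto_sum_range_of_wz wzF_succ_sub summable_wzF tendsto_wzG_atTop
      tendsto_tsum_wzF_atTop
  · refine ((summable_wzF 0).hasSum.mul_left 8).congr_fun fun j => ?_
    have := (poch_pos two_pos j).ne'
    simp only [wzF, wzKernel, poch_zero, Nat.cast_zero, add_zero]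
    field_simp
    ring
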